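/- For every finite, simple, connected, undirected graph G and every positive integer K: if the cop number c(G) equals K, then the concurrent cop number satisfies c̃(G) ≤ K. -/

import Mathlib

open Finset Filter

noncomputable section

variable {V : Type*} [Fintype V] [DecidableEq V]

/-- The closed neighborhood `N[u]` of a vertex `u`: `u` together with its neighbors. -/
def nbhd (G : SimpleGraph V) [DecidableRel G.Adj] (u : V) : Finset V :=
  insert u (G.neighborFinset u)

lemma nbhd_nonempty (G : SimpleGraph V) [DecidableRel G.Adj] (u : V) :
    (nbhd G u).Nonempty :=
  ⟨u, Finset.mem_insert_self u _⟩

/-! ### The turn-based cops and robber game (TBCR) with `K` cops -/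

/-- A position of the `K`-cop game: the cops' locations and the robber's location. -/
abbrev PosK (V : Type*) (K : ℕ) := (Fin K → V) × V

/-- A (deterministic, history-dependent) cop strategy for TBCR: an initial placement
of the `K` cops, and a move function from histories of completed rounds. -/
abbrev TBCop (V : Type*) (K : ℕ) := (Fin K → V) × (List (PosK V K) → Fin K → V)

/-- A (deterministic, history-dependent) robber strategy for TBCR: an initial placement
(seeing the cops' placement), and a move function from histories of completed rounds
together with the cops' fresh move (the cop player moves first in each round). -/
abbrev TBRob (V : Type*) (K : ℕ) := ((Fin K → V) → V) × (List (PosK V K) → (Fin K → V) → V)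

/-- The history of completed rounds of TBCR after round `t`; each token must move within its
closed neighborhood (attempted illegal moves leave the token in place). -/
def tbPlay (G : SimpleGraph V) [DecidableRel G.Adj] {K : ℕ}
    (sc : TBCop V K) (sr : TBRob V K) : ℕ → List (PosK V K)
  | 0 => [(sc.1, sr.1 sc.1)]
  | (t+1) =>
    let h := tbPlay G sc sr t
    let p := h.getLast?.getD (sc.1, sr.1 sc.1)
    let c' : Fin K → V := fun i => if sc.2 h i ∈ nbhd G (p.1 i) then sc.2 h i else p.1 i
    let w := sr.2 h c'
    h ++ [(c', if w ∈ nbhd G p.2 then w else p.2)]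

/-- The position of the TBCR game at the end of round `t`. -/
def tbPos (G : SimpleGraph V) [DecidableRel G.Adj] {K : ℕ}
    (sc : TBCop V K) (sr : TBRob V K) (t : ℕ) : PosK V K :=
  (tbPlay G sc sr t).getLast?.getD (sc.1, sr.1 sc.1)

/-- The robber is captured in TBCR: at some time a cop occupies the robber's current
vertex (either at the end of a round, or just after the cops' half of a round). -/
def tbCaptured (G : SimpleGraph V) [DecidableRel G.Adj] {K : ℕ}
    (sc : TBCop V K) (sr : TBRob V K) : Prop :=
  ∃ t : ℕ, ∃ i : Fin K,
    (tbPos G sc sr t).1 i = (tbPos G sc sr t).2 ∨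
    (tbPos G sc sr (t+1)).1 i = (tbPos G sc sr t).2

/-- `K` cops suffice in the turn-based game: the cop player has a strategy guaranteeing
capture against every robber strategy. -/
def tbCopWin (G : SimpleGraph V) [DecidableRel G.Adj] (K : ℕ) : Prop :=
  ∃ sc : TBCop V K, ∀ sr : TBRob V K, tbCaptured G sc sr

/-- The cop number `c(G)`: the minimum `K` for which the cop player wins TBCR. -/
def copNumber (G : SimpleGraph V) [DecidableRel G.Adj] : ℕ :=
  sInf {K | tbCopWin G K}

/-! ### The concurrent cops and robber game (CCCR) with `K` cops -/

/-- A randomized cop strategy in CCCR: to each finite history it assigns a probability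
distribution over the cops' next moves. -/
abbrev CCCop (V : Type*) (K : ℕ) := List (PosK V K) → PMF (Fin K → V)

/-- A randomized robber strategy in CCCR. -/
abbrev CCRob (V : Type*) (K : ℕ) := List (PosK V K) → PMF V

/-- A strategy is memoryless if the distribution it assigns depends only on the
current (i.e. most recent) position. -/
def MemorylessK {K : ℕ} (π : List (PosK V K) → PMF (Fin K → V)) : Prop :=
  ∀ h₁ h₂ : List (PosK V K), h₁.getLast? = h₂.getLast? → π h₁ = π h₂

/-- The CCCR transition function for `K` cops: both players move simultaneously, each
token within its closed neighborhood (illegal moves are ignored); a capture position is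
absorbing; if a cop and the robber swap adjacent vertices, the robber is captured
\"en passant\". -/
def ccStep (G : SimpleGraph V) [DecidableRel G.Adj] {K : ℕ}
    (p : PosK V K) (u : Fin K → V) (w : V) : PosK V K :=
  if ∃ i, p.1 i = p.2 then p
  else
    let u' : Fin K → V := fun i => if u i ∈ nbhd G (p.1 i) then u i else p.1 i
    let w' : V := if w ∈ nbhd G p.2 then w else p.2
    if ∃ i, u' i = p.2 ∧ w' = p.1 i then (u', p.2) else (u', w')

/-- The distribution over histories of the first `t+1` positions of CCCR, induced by a
pair of randomized strategies and an initial position. -/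
def ccPlay (G : SimpleGraph V) [DecidableRel G.Adj] {K : ℕ}
    (πC : CCCop V K) (πR : CCRob V K) (init : PosK V K) : ℕ → PMF (List (PosK V K))
  | 0 => PMF.pure [init]
  | (t+1) => (ccPlay G πC πR init t).bind fun h =>
      (πC h).bind fun u => (πR h).bind fun w =>
        PMF.pure (h ++ [ccStep G (h.getLast?.getD init) u w])

/-- The probability that the robber is still free (not captured) after round `t`. -/
def ccFreeProb (G : SimpleGraph V) [DecidableRel G.Adj] {K : ℕ}
    (πC : CCCop V K) (πR : CCRob V K) (init : PosK V K) (t : ℕ) : ENNReal :=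
  (ccPlay G πC πR init t).toOuterMeasure
    {h | ∀ i, (h.getLast?.getD init).1 i ≠ (h.getLast?.getD init).2}

/-- `K` cops suffice in the concurrent game: the cop player has a strategy ensuring
that, from every initial position and against every robber strategy, capture occurs
with probability one (the set of infinite histories avoiding capture has probability
zero). -/
def ccCopWin (G : SimpleGraph V) [DecidableRel G.Adj] (K : ℕ) : Prop :=
  ∃ πC : CCCop V K, ∀ init : PosK V K, ∀ πR : CCRob V K,
    (⨅ t : ℕ, ccFreeProb G πC πR init t) = 0

/-- The concurrent cop number `c̃(G)`. -/
def ccopNumber (G : SimpleGraph V) [DecidableRel G.Adj] : ℕ :=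
  sInf {K | ccCopWin G K}

/-! From the initial placement of a winning turn-based cop strategy, cops who always guess the
robber's next move correctly catch him in the concurrent game: a robber evading them would,
by committing to his escape move before seeing the cops' move, also evade the turn-based
strategy (the concurrent game with guessing cops is the turn-based game shifted by half a
round). By connectivity, guessing cops can first walk to that placement, so from every position
they catch the robber within a uniform number `R` of rounds. Uniformly random cops guess right
in each round with probability at least `|V|^(-K)`, hence every block of `R` rounds ends in
capture with probability at least `|V|^(-KR)`, and the robber escapes forever with probability
zero. -/

open scoped ENNReal

theorem Monotone.exists_forall_mem {α ι : Type*} [Finite ι] {s : ℕ → Set α} (hs : Monotone s)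
    {f : ι → α} (h : ∀ i, ∃ k, f i ∈ s k) : ∃ k, ∀ i, f i ∈ s k :=
  (Filter.eventually_all.2 fun i =>
    (h i).elim fun k hk => Filter.eventually_atTop.2 ⟨k, fun _ hm => hs hm hk⟩).exists

theorem PMF.tsum_mul_le_one {α : Type*} (μ : PMF α) {f : α → ℝ≥0∞} (hf : ∀ a, f a ≤ 1) :
    ∑' a, μ a * f a ≤ 1 :=
  calc ∑' a, μ a * f a ≤ ∑' a, μ a * 1 := ENNReal.tsum_le_tsum fun a => mul_le_mul_right (hf a) _
    _ = 1 := by simp only [mul_one, μ.tsum_coe]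

theorem PMF.tsum_mul_add_le_one {α : Type*} (μ : PMF α) {f : α → ℝ≥0∞} {ε : ℝ≥0∞}
    (hf : ∀ a, f a + ε ≤ 1) : ∑' a, μ a * f a + ε ≤ 1 := by
  calc ∑' a, μ a * f a + ε = ∑' a, μ a * (f a + ε) := by
        simp only [mul_add, ENNReal.tsum_add, ENNReal.tsum_mul_right, μ.tsum_coe, one_mul]
    _ ≤ 1 := μ.tsum_mul_le_one hf

theorem PMF.tsum_mul_add_mul_le_one {α : Type*} [DecidableEq α] (μ : PMF α) {f : α → ℝ≥0∞}
    {ε : ℝ≥0∞} {a₀ : α} (hf : ∀ a, f a ≤ 1) (ha₀ : f a₀ + ε ≤ 1) :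
    ∑' a, μ a * f a + μ a₀ * ε ≤ 1 := by
  calc ∑' a, μ a * f a + μ a₀ * ε = ∑' a, μ a * (f a + if a = a₀ then ε else 0) := by
        simp only [mul_add, ENNReal.tsum_add, mul_ite, mul_zero, tsum_ite_eq]
    _ ≤ 1 := μ.tsum_mul_le_one fun a => by split_ifs with h <;> simp [h, ha₀, hf]

section

variable (G : SimpleGraph V) [DecidableRel G.Adj] {K : ℕ}

lemma self_mem_nbhd (u : V) : u ∈ nbhd G u := Finset.mem_insert_self u _

def legalize (x w : V) : V := if w ∈ nbhd G x then w else x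

lemma legalize_mem_nbhd (x w : V) : legalize G x w ∈ nbhd G x := by
  unfold legalize
  split_ifs with h
  · exact h
  · exact self_mem_nbhd G x

lemma legalize_of_mem {x w : V} (h : w ∈ nbhd G x) : legalize G x w = w := if_pos h

lemma exists_mem_nbhd_dist_le (hconn : G.Connected) {a b : V} {n : ℕ}
    (h : G.dist a b ≤ n + 1) : ∃ a' ∈ nbhd G a, G.dist a' b ≤ n := by
  obtain ⟨p, hp⟩ := hconn.exists_walk_length_eq_dist a b
  cases p with
  | nil => exact ⟨a, self_mem_nbhd G a, by simp⟩
  | cons hadj q =>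
    refine ⟨_, Finset.mem_insert_of_mem ((G.mem_neighborFinset _ _).2 hadj), ?_⟩
    have := G.dist_le q
    rw [SimpleGraph.Walk.length_cons] at hp
    omega

lemma tbPos_succ_fst_mem (sc : TBCop V K) (sr : TBRob V K) (t : ℕ) (i : Fin K) :
    (tbPos G sc sr (t + 1)).1 i ∈ nbhd G ((tbPos G sc sr t).1 i) := by
  simp only [tbPos, tbPlay, List.getLast?_concat, Option.getD_some]
  exact legalize_mem_nbhd G _ _

lemma tbPos_succ_snd (sc : TBCop V K) (sr : TBRob V K) (t : ℕ) :
    (tbPos G sc sr (t + 1)).2 =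
      legalize G (tbPos G sc sr t).2 (sr.2 (tbPlay G sc sr t) (tbPos G sc sr (t + 1)).1) := by
  simp [tbPos, tbPlay, legalize]

abbrev IsCaught (p : PosK V K) : Prop := ∃ i, p.1 i = p.2

variable {G} in
lemma ccStep_of_isCaught {p : PosK V K} (hp : IsCaught p) (u : Fin K → V) (w : V) :
    ccStep G p u w = p :=
  if_pos hp

lemma ccStep_of_not_mem_nbhd {p : PosK V K} {w : V} (hw : w ∉ nbhd G p.2) (u : Fin K → V) :
    ccStep G p u w = ccStep G p u p.2 := by
  simp [ccStep, hw, self_mem_nbhd]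

lemma ccStep_fst {p : PosK V K} (hp : ¬IsCaught p) {u : Fin K → V}
    (hu : ∀ i, u i ∈ nbhd G (p.1 i)) (w : V) : (ccStep G p u w).1 = u := by
  unfold ccStep
  rw [if_neg hp]
  simp only [hu, if_true]
  split_ifs <;> rfl

lemma ccStep_eq_of_mem_nbhd {p : PosK V K} {u : Fin K → V} {w : V}
    (hu : ∀ i, u i ∈ nbhd G (p.1 i)) (hw : w ∈ nbhd G p.2) (h : ¬IsCaught (ccStep G p u w)) :
    ccStep G p u w = (u, w) := by
  have hp : ¬IsCaught p := fun hp => h (by rwa [ccStep_of_isCaught hp])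
  unfold ccStep at h ⊢
  rw [if_neg hp] at h ⊢
  simp only [hu, hw, if_true] at h ⊢
  split_ifs at h ⊢ with hpass
  · obtain ⟨i, hi, -⟩ := hpass
    exact absurd ⟨i, hi⟩ h
  · rfl

/-- Positions from which cops who always guess the robber's next move correctly catch him
within `k` rounds of the concurrent game. -/
def catchableWithin : ℕ → Set (PosK V K)
  | 0 => {p | IsCaught p}
  | k + 1 => {p | ∀ w, ∃ u, ccStep G p u w ∈ catchableWithin k}

lemma mem_catchableWithin_zero {p : PosK V K} : p ∈ catchableWithin G 0 ↔ IsCaught p := Iff.rfl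

lemma catchableWithin_mono : Monotone (catchableWithin G (K := K)) := by
  refine monotone_nat_of_le_succ fun k => ?_
  induction k with
  | zero => exact fun p hp w => ⟨p.1, by rwa [ccStep_of_isCaught hp]⟩
  | succ k ih => exact fun p hp w => (hp w).imp fun u hu => ih hu

lemma mem_catchableWithin_of_isCaught {p : PosK V K} (hp : IsCaught p) (k : ℕ) :
    p ∈ catchableWithin G k :=
  catchableWithin_mono G (Nat.zero_le k) hp

lemma exists_escape_move {p : PosK V K} (hp : ∀ k, p ∉ catchableWithin G k) :
    ∃ w ∈ nbhd G p.2, ∀ u k, ccStep G p u w ∉ catchableWithin G k := by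
  by_contra! hcatch
  have hall : ∀ w, ∃ u k, ccStep G p u w ∈ catchableWithin G k := by
    intro w
    by_cases hw : w ∈ nbhd G p.2
    · exact hcatch w hw
    · simpa only [ccStep_of_not_mem_nbhd G hw] using hcatch p.2 (self_mem_nbhd G p.2)
  choose u k hk using hall
  obtain ⟨m, hm⟩ := (catchableWithin_mono G).exists_forall_mem fun w => ⟨k w, hk w⟩
  exact hp (m + 1) fun w => ⟨u w, hm w⟩

/-- A robber at `z`, who got there from `y` by a move escaping `catchableWithin` in the
concurrent game, survives every cop move `x'` of the turn-based game. -/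
lemma escape_survives_cop_move {x x' : Fin K → V} {y z : V} (hz : z ∈ nbhd G y)
    (hesc : ∀ u k, ccStep G (x, y) u z ∉ catchableWithin G k)
    (hx' : ∀ i, x' i ∈ nbhd G (x i)) : (∀ i, x' i ≠ z) ∧ ∀ k, (x', z) ∉ catchableWithin G k := by
  have hstep := ccStep_eq_of_mem_nbhd G (p := (x, y)) hx' hz
    (mt (mem_catchableWithin_zero G).2 (hesc x' 0))
  have hesc' : ∀ k, (x', z) ∉ catchableWithin G k := fun k => by
    simpa only [hstep] using hesc x' k
  exact ⟨fun i hi => hesc' 0 ⟨i, hi⟩, hesc'⟩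

lemma tbCopWin_of_copNumber_eq (hK : 0 < K) (h : copNumber G = K) : tbCopWin G K := by
  have hne : {K' | tbCopWin G K'}.Nonempty := by
    by_contra hemp
    rw [Set.not_nonempty_iff_eq_empty] at hemp
    rw [copNumber, hemp, Nat.sInf_empty] at h
    omega
  exact h ▸ Nat.sInf_mem hne

lemma exists_mem_catchableWithin_of_tbCaptured (sc : TBCop V K)
    (hsc : ∀ sr, tbCaptured G sc sr) (y : V) : ∃ k, (sc.1, y) ∈ catchableWithin G k := by
  by_contra! hy
  have : Nonempty V := ⟨y⟩
  choose! esc hesc_mem hesc using fun p : PosK V K => exists_escape_move G (p := p)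
  let w₀ := esc (sc.1, y)
  let sr : TBRob V K := (fun _ => w₀, fun h x' => esc (x', (h.getLast?.getD (sc.1, w₀)).2))
  have hinv : ∀ t, ∃ y', (tbPos G sc sr t).2 ∈ nbhd G y' ∧
      ∀ u k, ccStep G ((tbPos G sc sr t).1, y') u (tbPos G sc sr t).2 ∉ catchableWithin G k := by
    intro t
    induction t with
    | zero => exact ⟨y, hesc_mem _ hy, hesc _ hy⟩
    | succ t ih =>
      obtain ⟨y', hz, hsafe⟩ := ih
      have hnext := (escape_survives_cop_move G hz hsafe (tbPos_succ_fst_mem G sc sr t)).2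
      have hrob : (tbPos G sc sr (t + 1)).2 =
          esc ((tbPos G sc sr (t + 1)).1, (tbPos G sc sr t).2) :=
        (tbPos_succ_snd G sc sr t).trans (legalize_of_mem G (hesc_mem _ hnext))
      exact ⟨(tbPos G sc sr t).2, hrob ▸ hesc_mem _ hnext, hrob ▸ hesc _ hnext⟩
  obtain ⟨t, i, hcap⟩ := hsc sr
  obtain ⟨y', hz, hsafe⟩ := hinv t
  rcases hcap with hcap | hcap
  · exact (escape_survives_cop_move G hz hsafe fun i => self_mem_nbhd G _).1 i hcap
  · exact (escape_survives_cop_move G hz hsafe (tbPos_succ_fst_mem G sc sr t)).1 i hcap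

lemma exists_mem_catchableWithin_of_mem_nbhd {x x₀ : Fin K → V} (hx₀ : ∀ i, x₀ i ∈ nbhd G (x i))
    (h : ∀ y, ∃ k, (x₀, y) ∈ catchableWithin G k) (y : V) :
    ∃ k, (x, y) ∈ catchableWithin G k := by
  obtain ⟨m, hm⟩ := (catchableWithin_mono G).exists_forall_mem h
  refine ⟨m + 1, ?_⟩
  by_cases hp : IsCaught (x, y)
  · exact mem_catchableWithin_of_isCaught G hp _
  · refine fun w => ⟨x₀, ?_⟩
    rw [← Prod.mk.eta (p := ccStep G (x, y) x₀ w), ccStep_fst G hp hx₀]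
    exact hm _

lemma exists_mem_catchableWithin (hconn : G.Connected) (x₀ : Fin K → V)
    (h₀ : ∀ y, ∃ k, (x₀, y) ∈ catchableWithin G k) (p : PosK V K) :
    ∃ k, p ∈ catchableWithin G k := by
  suffices ∀ n x, (∀ i, G.dist (x i) (x₀ i) ≤ n) → ∀ y, ∃ k, (x, y) ∈ catchableWithin G k from
    this _ p.1 (fun i => Finset.le_sup (f := fun i => G.dist (p.1 i) (x₀ i)) (mem_univ i)) p.2
  intro n
  induction n with
  | zero =>
    intro x hx
    obtain rfl : x = x₀ := funext fun i => hconn.dist_eq_zero_iff.1 (Nat.le_zero.1 (hx i))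
    exact h₀
  | succ n ih =>
    intro x hx
    choose x' hx'_mem hx'_dist using fun i => exists_mem_nbhd_dist_le G hconn (hx i)
    exact exists_mem_catchableWithin_of_mem_nbhd G hx'_mem (ih x' hx'_dist)

variable (πC : CCCop V K) (πR : CCRob V K) (init : PosK V K)

def ccRound (h : List (PosK V K)) : PMF (List (PosK V K)) :=
  (πC h).bind fun u => (πR h).bind fun w => PMF.pure (h ++ [ccStep G (h.getLast?.getD init) u w])

def ccExtend : ℕ → List (PosK V K) → PMF (List (PosK V K))
  | 0 => PMF.pure
  | n + 1 => fun h => (ccExtend n h).bind (ccRound G πC πR init)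

lemma ccPlay_eq_ccExtend (t : ℕ) : ccPlay G πC πR init t = ccExtend G πC πR init t [init] := by
  induction t with
  | zero => rfl
  | succ t ih => rw [ccPlay, ih]; rfl

lemma ccExtend_add (m n : ℕ) (h : List (PosK V K)) :
    ccExtend G πC πR init (m + n) h =
      (ccExtend G πC πR init m h).bind (ccExtend G πC πR init n) := by
  induction n with
  | zero => exact (PMF.bind_pure _).symm
  | succ n ih =>
    show (ccExtend G πC πR init (m + n) h).bind _ = _
    rw [ih, PMF.bind_bind]
    rfl

lemma ccExtend_succ' (n : ℕ) (h : List (PosK V K)) :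
    ccExtend G πC πR init (n + 1) h = (ccRound G πC πR init h).bind (ccExtend G πC πR init n) := by
  rw [add_comm, ccExtend_add]
  show ((PMF.pure h).bind _).bind _ = _
  rw [PMF.pure_bind]

def ccFreeProbFrom (n : ℕ) (h : List (PosK V K)) : ℝ≥0∞ :=
  (ccExtend G πC πR init n h).toOuterMeasure
    {h' | ∀ i, (h'.getLast?.getD init).1 i ≠ (h'.getLast?.getD init).2}

lemma ccFreeProb_eq_ccFreeProbFrom (t : ℕ) :
    ccFreeProb G πC πR init t = ccFreeProbFrom G πC πR init t [init] := by
  rw [ccFreeProb, ccPlay_eq_ccExtend]; rfl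

lemma ccFreeProbFrom_le_one (n : ℕ) (h : List (PosK V K)) : ccFreeProbFrom G πC πR init n h ≤ 1 :=
  (MeasureTheory.measure_mono (Set.subset_univ _)).trans
    ((PMF.toOuterMeasure_apply_eq_one_iff _ _).2 (Set.subset_univ _)).le

lemma ccFreeProbFrom_add (m n : ℕ) (h : List (PosK V K)) :
    ccFreeProbFrom G πC πR init (m + n) h =
      ∑' h', ccExtend G πC πR init m h h' * ccFreeProbFrom G πC πR init n h' := by
  rw [ccFreeProbFrom, ccExtend_add, PMF.toOuterMeasure_bind_apply]; rfl

lemma ccFreeProbFrom_succ (n : ℕ) (h : List (PosK V K)) :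
    ccFreeProbFrom G πC πR init (n + 1) h =
      ∑' w, πR h w * ∑' u, πC h u *
        ccFreeProbFrom G πC πR init n (h ++ [ccStep G (h.getLast?.getD init) u w]) := by
  rw [ccFreeProbFrom, ccExtend_succ', ccRound, PMF.bind_comm, PMF.bind_bind,
    PMF.toOuterMeasure_bind_apply]
  refine tsum_congr fun w => ?_
  rw [PMF.bind_bind, PMF.toOuterMeasure_bind_apply]
  congr 1
  refine tsum_congr fun u => ?_
  rw [PMF.pure_bind]
  rfl

lemma ccFreeProbFrom_eq_zero_of_isCaught (n : ℕ) {h : List (PosK V K)}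
    (hh : IsCaught (h.getLast?.getD init)) : ccFreeProbFrom G πC πR init n h = 0 := by
  induction n generalizing h with
  | zero =>
    rw [ccFreeProbFrom, ccExtend, PMF.toOuterMeasure_pure_apply, if_neg]
    obtain ⟨i, hi⟩ := hh
    exact fun hfree => hfree i hi
  | succ n ih =>
    simp only [ccFreeProbFrom_succ, ccStep_of_isCaught hh, ih (h := h ++ [_]) (by simpa using hh),
      mul_zero, tsum_zero]

lemma ccFreeProbFrom_mul_le_pow {R : ℕ} {a : ℝ≥0∞}
    (ha : ∀ h, ccFreeProbFrom G πC πR init R h ≤ a) (n : ℕ) (h : List (PosK V K)) :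
    ccFreeProbFrom G πC πR init (R * n) h ≤ a ^ n := by
  induction n generalizing h with
  | zero => simpa using ccFreeProbFrom_le_one G πC πR init 0 h
  | succ n ih =>
    have hfree : ∀ h', ccFreeProbFrom G πC πR init (R * n) h' ≤
        a ^ n * ccFreeProbFrom G πC πR init 0 h' := by
      intro h'
      by_cases hh : IsCaught (h'.getLast?.getD init)
      · rw [ccFreeProbFrom_eq_zero_of_isCaught G πC πR init _ hh]
        exact zero_le
      · have : ccFreeProbFrom G πC πR init 0 h' = 1 := by
          rw [ccFreeProbFrom, ccExtend, PMF.toOuterMeasure_pure_apply, if_pos]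
          exact fun i hi => hh ⟨i, hi⟩
        rw [this, mul_one]
        exact ih h'
    calc ccFreeProbFrom G πC πR init (R * (n + 1)) h
        = ∑' h', ccExtend G πC πR init R h h' * ccFreeProbFrom G πC πR init (R * n) h' := by
          rw [mul_add_one, add_comm, ccFreeProbFrom_add]
      _ ≤ ∑' h', ccExtend G πC πR init R h h' * (a ^ n * ccFreeProbFrom G πC πR init 0 h') := by
          gcongr with h'
          exact hfree h'
      _ = a ^ n * ccFreeProbFrom G πC πR init (R + 0) h := by
          rw [ccFreeProbFrom_add, ← ENNReal.tsum_mul_left]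
          simp only [mul_left_comm]
      _ ≤ a ^ n * a := by gcongr; exact ha h
      _ = a ^ (n + 1) := (pow_succ a n).symm

lemma iInf_ccFreeProb_eq_zero {R : ℕ} {a : ℝ≥0∞} (ha₁ : a < 1)
    (ha : ∀ h, ccFreeProbFrom G πC πR init R h ≤ a) : ⨅ t, ccFreeProb G πC πR init t = 0 :=
  le_antisymm (ge_of_tendsto (ENNReal.tendsto_pow_atTop_nhds_zero_of_lt_one ha₁)
    (Filter.Eventually.of_forall fun n => (iInf_le _ (R * n)).trans <| by
      rw [ccFreeProb_eq_ccFreeProbFrom]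
      exact ccFreeProbFrom_mul_le_pow G πC πR init ha n [init])) zero_le

/-- Whatever the robber does, uniformly random cops play, in each round, the move that a
guessing cop would play with probability at least `1 / |V|^K`. -/
lemma ccFreeProbFrom_uniform_add_pow_le_one [Nonempty V] (k : ℕ) {h : List (PosK V K)}
    (hk : h.getLast?.getD init ∈ catchableWithin G k) :
    ccFreeProbFrom G (fun _ => PMF.uniformOfFintype (Fin K → V)) πR init k h +
      (Fintype.card (Fin K → V) : ℝ≥0∞)⁻¹ ^ k ≤ 1 := by
  induction k generalizing h with
  | zero => rw [ccFreeProbFrom_eq_zero_of_isCaught G _ πR init 0 hk, zero_add, pow_zero]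
  | succ k ih =>
    rw [ccFreeProbFrom_succ]
    refine PMF.tsum_mul_add_le_one _ fun w => ?_
    obtain ⟨u, hu⟩ := hk w
    have := PMF.tsum_mul_add_mul_le_one (PMF.uniformOfFintype (Fin K → V))
      (f := fun u => ccFreeProbFrom G _ πR init k (h ++ [ccStep G (h.getLast?.getD init) u w]))
      (fun _ => ccFreeProbFrom_le_one G _ πR init k _) (ih (by simpa using hu))
    rwa [PMF.uniformOfFintype_apply, ← pow_succ'] at this

lemma ccCopWin_of_forall_mem_catchableWithin [Nonempty V] {R : ℕ}
    (hR : ∀ p : PosK V K, p ∈ catchableWithin G R) : ccCopWin G K := by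
  refine ⟨fun _ => PMF.uniformOfFintype (Fin K → V), fun init πR => ?_⟩
  set c : ℝ≥0∞ := (Fintype.card (Fin K → V) : ℝ≥0∞)⁻¹ ^ R
  have hc₀ : c ≠ 0 := pow_ne_zero _ (ENNReal.inv_ne_zero.2 (ENNReal.natCast_ne_top _))
  have hc₁ : c ≠ ⊤ :=
    ENNReal.pow_ne_top (ENNReal.inv_ne_top.2 (Nat.cast_ne_zero.2 Fintype.card_ne_zero))
  exact iInf_ccFreeProb_eq_zero G _ πR init
    (ENNReal.sub_lt_self ENNReal.one_ne_top one_ne_zero hc₀) fun h =>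
      ENNReal.le_sub_of_add_le_right hc₁
        (ccFreeProbFrom_uniform_add_pow_le_one G πR init R (hR _))

end

/-- if the cop number `c(G)` equals `K > 0` then the concurrent cop
number satisfies `c̃(G) ≤ K`. -/
theorem ccopNumber_le_of_copNumber_eq (G : SimpleGraph V) [DecidableRel G.Adj]
    (hconn : G.Connected) (K : ℕ) (hK : 0 < K) (h : copNumber G = K) :
    ccopNumber G ≤ K := by
  obtain ⟨sc, hsc⟩ := tbCopWin_of_copNumber_eq G hK h
  have : Nonempty V := hconn.nonempty
  obtain ⟨R, hR⟩ := (catchableWithin_mono G).exists_forall_mem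
    (exists_mem_catchableWithin G hconn sc.1 (exists_mem_catchableWithin_of_tbCaptured G sc hsc))
  exact Nat.sInf_le (ccCopWin_of_forall_mem_catchableWithin G hR)
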